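/- Let p ∈ [1,+∞), let v : 𝕋³ → ℝ³ be smooth and divergence free, and let B ∈ L^p(𝕋³; ℝ³) be divergence free in the distributional sense. Then there is a constant C, independent of ε, v and B, such that ‖[·∇v, ϱ_ε]B‖_{L^p(𝕋³;ℝ³)} ≤ C ε ‖v‖_{C²} ‖ϱ‖_{C⁰} ‖B‖_{L^p} for all ε ∈ (0,1); in particular ‖[·∇v, ϱ_ε]B‖_{L^p(𝕋³;ℝ³)} → 0 as ε → 0. -/

import Mathlib

open MeasureTheory
open scoped RealInnerProductSpace

noncomputable section

/-- `ℝ³` with the Euclidean inner product. Functions on the torus `𝕋³ = ℝ³/(2πℤ)³` are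
identified with `(2πℤ)³`-periodic functions on `ℝ³`. -/
abbrev E3 := EuclideanSpace ℝ (Fin 3)

/-- A fundamental domain `[0,2π)³` for the torus `𝕋³`. -/
def FundDom : Set E3 := {x | ∀ i, 0 ≤ x i ∧ x i < 2 * Real.pi}

/-- `(2πℤ)³`-periodicity of a function on `ℝ³`. -/
def IsPeriodic {α : Type*} (f : E3 → α) : Prop :=
  ∀ (x : E3) (i : Fin 3), f (x + (2 * Real.pi) • EuclideanSpace.single i (1 : ℝ)) = f x

/-- The rescaled mollifier `ϱ_ε(z) = ε⁻³ ϱ(z/ε)`. -/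
def mollify (ϱ : E3 → ℝ) (ε : ℝ) (z : E3) : ℝ := (ε ^ 3)⁻¹ * ϱ (ε⁻¹ • z)

/-- The standing assumptions on the mollifier `ϱ`: smooth, nonnegative, even, of total
integral one, with support contained in `[−1/2,1/2]³`. -/
def IsMollifier (ϱ : E3 → ℝ) : Prop :=
  ContDiff ℝ (⊤ : ℕ∞) ϱ ∧ (∀ x, 0 ≤ ϱ x) ∧ (∀ x, ϱ (-x) = ϱ x) ∧ (∫ x, ϱ x) = 1 ∧
    tsupport ϱ ⊆ {x | ∀ i, |x i| ≤ 1 / 2}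

/-- The commutator `[·∇v, ϱ_ε]B(x) = ∫_{ℝ³} B(z)·∇(v(z) − v(x)) ϱ_ε(x−z) dz`, where
`B(z)·∇(v(z) − v(x))` denotes the vector `(B(z)·∇)v (z) − (B(z)·∇)v (x)`, i.e. the
difference of the Jacobians of `v` at `z` and at `x` applied to `B(z)`. -/
def comm2 (ϱ : E3 → ℝ) (ε : ℝ) (v B : E3 → E3) (x : E3) : E3 :=
  ∫ z, mollify ϱ ε (x - z) • (fderiv ℝ v z (B z) - fderiv ℝ v x (B z))

/-- The `C²` norm of a vector field. -/
def C2normV (v : E3 → E3) : ℝ :=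
  ⨆ x, max (max ‖v x‖ ‖fderiv ℝ v x‖) ‖fderiv ℝ (fderiv ℝ v) x‖

/-- The `C⁰` (sup) norm of a scalar function. -/
def C0normS (f : E3 → ℝ) : ℝ := ⨆ x, |f x|

/-- The `L^p(𝕋³;ℝ³)` norm, computed over the fundamental domain. -/
def LpNormT (p : ℝ) (f : E3 → E3) : ℝ := (∫ x in FundDom, ‖f x‖ ^ p) ^ (1 / p)

/-- Divergence-free condition for a smooth vector field. -/
def DivFree (v : E3 → E3) : Prop :=
  ∀ x : E3, ∑ i, fderiv ℝ v x (EuclideanSpace.single i (1 : ℝ)) i = 0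

/-- Distributional divergence-free condition on the torus:
`∫_{𝕋³} B · ∇φ dx = 0` for all smooth (periodic) scalar `φ`. -/
def DistDivFree (B : E3 → E3) : Prop :=
  ∀ φ : E3 → ℝ, ContDiff ℝ (⊤ : ℕ∞) φ → IsPeriodic φ →
    (∫ x in FundDom, ⟪B x, gradient φ x⟫) = 0

open scoped ENNReal

section AuxLemmas


lemma coord_le_norm (w : E3) (i : Fin 3) : |w i| ≤ ‖w‖ := by
  rw [EuclideanSpace.norm_eq, ← Real.sqrt_sq_eq_abs]
  apply Real.sqrt_le_sqrt
  simp only [Real.norm_eq_abs, sq_abs]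
  exact Finset.single_le_sum (f := fun j => w j ^ 2) (fun j _ => sq_nonneg _) (Finset.mem_univ i)

lemma norm_le_of_coords {w : E3} {r : ℝ} (hr : 0 ≤ r) (h : ∀ i, |w i| ≤ r) : ‖w‖ ≤ 2 * r := by
  rw [EuclideanSpace.norm_eq]
  simp only [Real.norm_eq_abs, sq_abs]
  have hb : ∑ i, w i ^ 2 ≤ (2*r)^2 := by
    have h2 : ∀ i : Fin 3, w i ^ 2 ≤ r ^ 2 := fun i => by
      have := h i; nlinarith [abs_nonneg (w i), sq_abs (w i)]
    calc ∑ i, w i ^ 2 ≤ ∑ _i : Fin 3, r ^ 2 := Finset.sum_le_sum fun i _ => h2 i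
    _ = 3 * r^2 := by
      rw [Finset.sum_const, Finset.card_univ, Fintype.card_fin, nsmul_eq_mul]; push_cast; ring
    _ ≤ (2*r)^2 := by nlinarith
  calc Real.sqrt (∑ i, w i ^2) ≤ Real.sqrt ((2*r)^2) := Real.sqrt_le_sqrt hb
  _ = 2*r := Real.sqrt_sq (by linarith)

/-- The lattice vector `∑ i 2π m i e i`. -/
def per3 (m : Fin 3 → ℤ) : E3 := ∑ i, ((2 * Real.pi) * (m i : ℝ)) • EuclideanSpace.single i (1:ℝ)

lemma per3_apply (m : Fin 3 → ℤ) (j : Fin 3) : per3 m j = 2 * Real.pi * (m j : ℝ) := by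
  rw [per3, WithLp.ofLp_sum, Finset.sum_apply]
  simp [EuclideanSpace.single_apply]

lemma isPeriodic_zsmul {α : Type*} {f : E3 → α} (hf : IsPeriodic f) (x : E3) (i : Fin 3) (n : ℤ) :
    f (x + ((2 * Real.pi) * (n:ℝ)) • EuclideanSpace.single i (1:ℝ)) = f x := by
  induction n using Int.induction_on with
  | zero => simp
  | succ n ih =>
    push_cast at ih ⊢
    have harg : x + (2 * Real.pi * ((n:ℝ) + 1)) • EuclideanSpace.single i (1:ℝ)
        = (x + (2 * Real.pi * (n:ℝ)) • EuclideanSpace.single i (1:ℝ))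
          + (2 * Real.pi) • EuclideanSpace.single i (1:ℝ) := by
      rw [mul_add, mul_one, add_smul, add_assoc]
    rw [harg, hf]; exact ih
  | pred n ih =>
    push_cast at ih ⊢
    have hsc : 2 * Real.pi * (-(n:ℝ) - 1) + 2 * Real.pi = 2 * Real.pi * (-(n:ℝ)) := by ring
    have harg : x + (2 * Real.pi * (-(n:ℝ) - 1)) • EuclideanSpace.single i (1:ℝ)
          + (2 * Real.pi) • EuclideanSpace.single i (1:ℝ)
        = x + (2 * Real.pi * (-(n:ℝ))) • EuclideanSpace.single i (1:ℝ) := by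
      rw [add_assoc, ← add_smul, hsc]
    calc f (x + (2 * Real.pi * (-(n:ℝ) - 1)) • EuclideanSpace.single i (1:ℝ))
        = f (x + (2 * Real.pi * (-(n:ℝ) - 1)) • EuclideanSpace.single i (1:ℝ)
            + (2 * Real.pi) • EuclideanSpace.single i (1:ℝ)) := (hf _ i).symm
    _ = f (x + (2 * Real.pi * (-(n:ℝ))) • EuclideanSpace.single i (1:ℝ)) := by rw [harg]
    _ = f x := ih

lemma isPeriodic_per3 {α : Type*} {f : E3 → α} (hf : IsPeriodic f) (x : E3) (m : Fin 3 → ℤ) :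
    f (x + per3 m) = f x := by
  have h0 : per3 m = ((2 * Real.pi) * (m 0 : ℝ)) • EuclideanSpace.single 0 (1:ℝ)
      + ((2 * Real.pi) * (m 1 : ℝ)) • EuclideanSpace.single 1 (1:ℝ)
      + ((2 * Real.pi) * (m 2 : ℝ)) • EuclideanSpace.single 2 (1:ℝ) := by
    rw [per3, Fin.sum_univ_three]
  rw [h0, ← add_assoc, ← add_assoc, isPeriodic_zsmul hf _ _ (m 2), isPeriodic_zsmul hf _ _ (m 1),
    isPeriodic_zsmul hf _ _ (m 0)]

lemma isCompact_box (a b : ℝ) : IsCompact {x : E3 | ∀ i, x i ∈ Set.Icc a b} := by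
  have hclosed : IsClosed {x : E3 | ∀ i, x i ∈ Set.Icc a b} := by
    have : {x : E3 | ∀ i, x i ∈ Set.Icc a b} = ⋂ i, (fun x : E3 => x i) ⁻¹' Set.Icc a b := by
      ext x; simp [Set.mem_iInter]
    rw [this]
    exact isClosed_iInter fun i => IsClosed.preimage (EuclideanSpace.proj i).continuous isClosed_Icc
  refine IsCompact.of_isClosed_subset (isCompact_closedBall 0 (2 * (|a| + |b|))) hclosed ?_
  intro x hx
  rw [Metric.mem_closedBall, dist_zero_right]
  refine norm_le_of_coords (by positivity) fun i => ?_
  have h := hx i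
  rw [abs_le]
  constructor
  · calc -(|a| + |b|) ≤ -|a| := by nlinarith [abs_nonneg b]
    _ ≤ a := neg_abs_le a
    _ ≤ x i := h.1
  · calc x i ≤ b := h.2
    _ ≤ |b| := le_abs_self b
    _ ≤ |a| + |b| := by nlinarith [abs_nonneg a]

lemma exists_box_repr {α : Type*} {f : E3 → α} (hf : IsPeriodic f) (x : E3) :
    ∃ y, y ∈ {w : E3 | ∀ i, w i ∈ Set.Icc 0 (2 * Real.pi)} ∧ f y = f x := by
  have h2π : (0:ℝ) < 2 * Real.pi := by positivity
  refine ⟨x + per3 (fun i => -⌊x i / (2 * Real.pi)⌋), fun i => ?_, isPeriodic_per3 hf x _⟩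
  have hyi : (x + per3 (fun i => -⌊x i / (2 * Real.pi)⌋)) i
      = x i - 2 * Real.pi * (⌊x i / (2 * Real.pi)⌋ : ℝ) := by
    have := per3_apply (fun i => -⌊x i / (2 * Real.pi)⌋) i
    simp only [PiLp.add_apply, this]
    push_cast; ring
  rw [hyi]
  have h1 : (⌊x i / (2 * Real.pi)⌋ : ℝ) ≤ x i / (2 * Real.pi) := Int.floor_le _
  have h2 : x i / (2 * Real.pi) < ⌊x i / (2 * Real.pi)⌋ + 1 := Int.lt_floor_add_one _
  constructor
  · have := mul_le_mul_of_nonneg_left h1 h2π.le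
    rw [mul_div_cancel₀ _ h2π.ne'] at this
    linarith
  · have := mul_lt_mul_of_pos_left h2 h2π
    rw [mul_div_cancel₀ _ h2π.ne'] at this
    linarith

lemma periodic_bound {F : Type*} [NormedAddCommGroup F] {f : E3 → F} (hf : IsPeriodic f)
    (hc : Continuous f) : ∃ M, ∀ x, ‖f x‖ ≤ M := by
  obtain ⟨M, hM⟩ := (isCompact_box 0 (2 * Real.pi)).exists_bound_of_continuousOn hc.continuousOn
  refine ⟨M, fun x => ?_⟩
  obtain ⟨y, hy, hyx⟩ := exists_box_repr hf x
  rw [← hyx]; exact hM y hy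

lemma fderiv_shift {F : Type*} [NormedAddCommGroup F] [NormedSpace ℝ F] {f : E3 → F}
    (hf : Differentiable ℝ f) (c x : E3) :
    fderiv ℝ (fun y => f (y + c)) x = fderiv ℝ f (x + c) := by
  have h1 : HasFDerivAt (fun y : E3 => y + c) (ContinuousLinearMap.id ℝ E3) x :=
    (hasFDerivAt_id x).add_const c
  have h2 := ((hf (x + c)).hasFDerivAt.comp x h1)
  have h3 := h2.fderiv
  simp only [ContinuousLinearMap.comp_id] at h3
  exact h3

lemma isPeriodic_fderiv {F : Type*} [NormedAddCommGroup F] [NormedSpace ℝ F] {f : E3 → F}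
    (hf : Differentiable ℝ f) (hp : IsPeriodic f) : IsPeriodic (fderiv ℝ f) := by
  intro x i
  set c := (2 * Real.pi) • EuclideanSpace.single i (1:ℝ)
  have : (fun y => f (y + c)) = f := funext fun y => hp y i
  calc fderiv ℝ f (x + c) = fderiv ℝ (fun y => f (y + c)) x := (fderiv_shift hf c x).symm
  _ = fderiv ℝ f x := by rw [this]


lemma C0_facts {ϱ : E3 → ℝ} (hϱ : IsMollifier ϱ) :
    (∀ x, |ϱ x| ≤ C0normS ϱ) ∧ 0 ≤ C0normS ϱ := by
  obtain ⟨hsm, hnn, hev, hint, hsupp⟩ := hϱ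
  have hbox : {x : E3 | ∀ i, |x i| ≤ 1/2} = {x : E3 | ∀ i, x i ∈ Set.Icc (-(1/2)) (1/2)} := by
    ext x; simp [abs_le]
  obtain ⟨C, hC⟩ := (isCompact_box (-(1/2)) (1/2)).exists_bound_of_continuousOn
    hsm.continuous.continuousOn
  have hC0 : (0:ℝ) ≤ C := by
    have h0 : (0:E3) ∈ {x : E3 | ∀ i, x i ∈ Set.Icc (-(1/2)) (1/2)} := by
      intro i; norm_num
    exact le_trans (norm_nonneg _) (hC 0 h0)
  have hall : ∀ x, |ϱ x| ≤ C := by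
    intro x
    by_cases hx : x ∈ tsupport ϱ
    · exact hC x (hbox ▸ hsupp hx)
    · rw [image_eq_zero_of_notMem_tsupport hx]; simpa using hC0
  have hbdd : BddAbove (Set.range fun x => |ϱ x|) := ⟨C, by rintro _ ⟨x, rfl⟩; exact hall x⟩
  constructor
  · intro x; exact le_ciSup hbdd x
  · exact le_trans (abs_nonneg (ϱ 0)) (le_ciSup hbdd 0)

lemma C2_facts {v : E3 → E3} (hv : ContDiff ℝ (⊤ : ℕ∞) v) (hvp : IsPeriodic v) :
    (∀ y, ‖fderiv ℝ (fderiv ℝ v) y‖ ≤ C2normV v) ∧ 0 ≤ C2normV v := by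
  have hDv : ContDiff ℝ (⊤ : ℕ∞) (fderiv ℝ v) := hv.fderiv_right (by simp)
  have hDvp : IsPeriodic (fderiv ℝ v) := isPeriodic_fderiv (hv.differentiable (by simp)) hvp
  have hD2vp : IsPeriodic (fderiv ℝ (fderiv ℝ v)) :=
    isPeriodic_fderiv (hDv.differentiable (by simp)) hDvp
  set φ : E3 → ℝ := fun x => max (max ‖v x‖ ‖fderiv ℝ v x‖) ‖fderiv ℝ (fderiv ℝ v) x‖ with hφ
  have hφc : Continuous φ := by
    exact ((hv.continuous.norm.max (hv.continuous_fderiv (by simp)).norm).max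
      (hDv.continuous_fderiv (by simp)).norm)
  have hφp : IsPeriodic φ := by
    intro x i; simp only [hφ, hvp x i, hDvp x i, hD2vp x i]
  obtain ⟨M, hM⟩ := periodic_bound hφp hφc
  have hbdd : BddAbove (Set.range φ) :=
    ⟨M, by rintro _ ⟨x, rfl⟩; exact (le_abs_self _).trans ((Real.norm_eq_abs _ ▸ hM x))⟩
  constructor
  · intro y
    exact le_trans (le_max_right _ _) (le_ciSup hbdd y)
  · exact le_trans (le_trans (norm_nonneg (v 0)) (le_trans (le_max_left _ _) (le_max_left _ _)))
      (le_ciSup hbdd 0)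

lemma mollify_support {ϱ : E3 → ℝ} (hϱ : IsMollifier ϱ) {ε : ℝ} (hε : 0 < ε) {w : E3}
    (h : mollify ϱ ε w ≠ 0) : ‖w‖ ≤ ε := by
  have hρ : ϱ (ε⁻¹ • w) ≠ 0 := by
    intro h0; apply h; rw [mollify, h0, mul_zero]
  have hmem : ε⁻¹ • w ∈ tsupport ϱ := subset_tsupport ϱ (by simpa [Function.mem_support] using hρ)
  have hcoords := hϱ.2.2.2.2 hmem
  have : ∀ i, |w i| ≤ ε / 2 := by
    intro i
    have h1 := hcoords i
    have h2 : (ε⁻¹ • w) i = ε⁻¹ * w i := by simp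
    rw [h2, abs_mul, abs_inv, abs_of_pos hε] at h1
    calc |w i| = ε * (ε⁻¹ * |w i|) := by field_simp
    _ ≤ ε * (1/2) := by
      apply mul_le_mul_of_nonneg_left h1 hε.le
    _ = ε / 2 := by ring
  calc ‖w‖ ≤ 2 * (ε/2) := norm_le_of_coords (by linarith) this
  _ = ε := by ring

lemma mollify_abs_le {ϱ : E3 → ℝ} (hϱ : IsMollifier ϱ) {ε : ℝ} (hε : 0 < ε) (w : E3) :
    |mollify ϱ ε w| ≤ (ε^3)⁻¹ * C0normS ϱ := by
  rw [mollify, abs_mul, abs_inv, abs_pow, abs_of_pos hε]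
  exact mul_le_mul_of_nonneg_left ((C0_facts hϱ).1 _) (by positivity)

lemma fderiv_lip {v : E3 → E3} (hv : ContDiff ℝ (⊤ : ℕ∞) v) {M : ℝ}
    (hM : ∀ y, ‖fderiv ℝ (fderiv ℝ v) y‖ ≤ M) (x z : E3) :
    ‖fderiv ℝ v z - fderiv ℝ v x‖ ≤ M * ‖z - x‖ := by
  have hDv : ContDiff ℝ (⊤ : ℕ∞) (fderiv ℝ v) := hv.fderiv_right (by simp)
  exact Convex.norm_image_sub_le_of_norm_fderiv_le
    (fun y _ => (hDv.differentiable (by simp)) y)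
    (fun y _ => hM y) convex_univ (Set.mem_univ x) (Set.mem_univ z)

lemma measurableSet_FundDom : MeasurableSet FundDom := by
  have : FundDom = ⋂ i, ((fun x : E3 => x i) ⁻¹' Set.Ici 0 ∩ (fun x : E3 => x i) ⁻¹' Set.Iio (2 * Real.pi)) := by
    ext x; simp [FundDom, Set.mem_iInter, forall_and]
  rw [this]
  exact MeasurableSet.iInter fun i =>
    ((EuclideanSpace.proj i).continuous.measurable measurableSet_Ici).inter
    ((EuclideanSpace.proj i).continuous.measurable measurableSet_Iio)

/-- A big box containing the `1`-neighbourhood of the fundamental domain. -/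
def BigBox : Set E3 := {z | ∀ i, -(2 * Real.pi) ≤ z i ∧ z i < 4 * Real.pi}

lemma measurableSet_BigBox : MeasurableSet BigBox := by
  have : BigBox = ⋂ i, ((fun x : E3 => x i) ⁻¹' Set.Ici (-(2 * Real.pi)) ∩ (fun x : E3 => x i) ⁻¹' Set.Iio (4 * Real.pi)) := by
    ext x; simp [BigBox, Set.mem_iInter, forall_and]
  rw [this]
  exact MeasurableSet.iInter fun i =>
    ((EuclideanSpace.proj i).continuous.measurable measurableSet_Ici).inter
    ((EuclideanSpace.proj i).continuous.measurable measurableSet_Iio)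

lemma volume_BigBox_lt_top : volume BigBox < ⊤ := by
  have hsub : BigBox ⊆ {x : E3 | ∀ i, x i ∈ Set.Icc (-(2 * Real.pi)) (4 * Real.pi)} := by
    intro z hz i; exact ⟨(hz i).1, (hz i).2.le⟩
  exact lt_of_le_of_lt (measure_mono hsub)
    (isCompact_box (-(2 * Real.pi)) (4 * Real.pi)).measure_lt_top

lemma volume_FundDom_lt_top : volume FundDom < ⊤ := by
  have hsub : FundDom ⊆ {x : E3 | ∀ i, x i ∈ Set.Icc 0 (2 * Real.pi)} := by
    intro z hz i; exact ⟨(hz i).1, (hz i).2.le⟩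
  exact lt_of_le_of_lt (measure_mono hsub) (isCompact_box 0 (2 * Real.pi)).measure_lt_top

lemma mem_BigBox_of_near {x z : E3} {ε : ℝ} (hx : x ∈ FundDom) (hε0 : 0 < ε) (hε1 : ε ≤ 1)
    (h : dist z x ≤ ε) : z ∈ BigBox := by
  intro i
  have hπ := Real.pi_gt_three
  have hzx : |z i - x i| ≤ ε := by
    have h1 : |(z - x) i| ≤ ‖z - x‖ := coord_le_norm _ i
    have h2 : (z - x) i = z i - x i := by simp
    rw [h2] at h1
    calc |z i - x i| ≤ ‖z - x‖ := h1
    _ = dist z x := (dist_eq_norm z x).symm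
    _ ≤ ε := h
  have hx1 := (hx i).1; have hx2 := (hx i).2
  rw [abs_le] at hzx
  constructor <;> nlinarith

lemma volume_closedBall_le (x : E3) {ε : ℝ} (hε : 0 ≤ ε) :
    volume (Metric.closedBall x ε) ≤ ENNReal.ofReal (8 * ε^3) := by
  have hsub : Metric.closedBall x ε ⊆
      (MeasurableEquiv.toLp 2 (Fin 3 → ℝ)).symm ⁻¹' (Set.univ.pi fun i => Set.Icc (x i - ε) (x i + ε)) := by
    intro z hz
    simp only [Set.mem_preimage, Set.mem_pi, Set.mem_univ, forall_true_left]
    intro i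
    have h1 : |(z - x) i| ≤ ‖z - x‖ := coord_le_norm _ i
    have h2 : (z - x) i = z i - x i := by simp
    rw [Metric.mem_closedBall, dist_eq_norm] at hz
    rw [h2] at h1
    have : |z i - x i| ≤ ε := le_trans h1 hz
    rw [abs_le] at this
    have he : (MeasurableEquiv.toLp 2 (Fin 3 → ℝ)).symm z i = z i := rfl
    rw [he]
    exact ⟨by linarith [this.1], by linarith [this.2]⟩
  calc volume (Metric.closedBall x ε)
      ≤ volume ((MeasurableEquiv.toLp 2 (Fin 3 → ℝ)).symm ⁻¹'
        (Set.univ.pi fun i => Set.Icc (x i - ε) (x i + ε))) := measure_mono hsub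
  _ = volume (Set.univ.pi fun i : Fin 3 => Set.Icc (x i - ε) (x i + ε)) := by
      exact (EuclideanSpace.volume_preserving_symm_measurableEquiv_toLp (Fin 3)).measure_preimage
        ((MeasurableSet.univ_pi fun i => measurableSet_Icc).nullMeasurableSet)
  _ = ∏ i : Fin 3, volume (Set.Icc (x i - ε) (x i + ε)) := volume_pi_pi _
  _ = ∏ _i : Fin 3, ENNReal.ofReal (2 * ε) := by
      apply Finset.prod_congr rfl; intro i _
      rw [Real.volume_Icc]; congr 1; ring
  _ = ENNReal.ofReal (2 * ε) ^ 3 := by rw [Finset.prod_const]; congr 1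
  _ = ENNReal.ofReal ((2 * ε)^3) := (ENNReal.ofReal_pow (by linarith) 3).symm
  _ = ENNReal.ofReal (8 * ε^3) := by congr 1; ring

lemma lintegral_translate (h : E3 → ℝ≥0∞) (t : E3) :
    ∫⁻ z in (fun w => w + t) '' FundDom, h z = ∫⁻ w in FundDom, h (w + t) := by
  have hmp : MeasurePreserving (fun w : E3 => w + t) volume volume :=
    measurePreserving_add_right volume t
  have hemb : MeasurableEmbedding (fun w : E3 => w + t) :=
    (Homeomorph.addRight t).measurableEmbedding
  exact (hmp.setLIntegral_comp_emb hemb h FundDom).symm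

lemma bigBox_subset_union :
    BigBox ⊆ ⋃ (k : Fin 3 → Fin 3), (fun w => w + per3 (fun i => (k i : ℤ) - 1)) '' FundDom := by
  intro z hz
  have h2π : (0:ℝ) < 2 * Real.pi := by positivity
  classical
  set k : Fin 3 → Fin 3 := fun i => if z i < 0 then 0 else if z i < 2 * Real.pi then 1 else 2 with hk
  refine Set.mem_iUnion.2 ⟨k, ?_⟩
  refine ⟨z - per3 (fun i => (k i : ℤ) - 1), ?_, sub_add_cancel z _⟩
  intro i
  have hzi := hz i
  have hw : (z - per3 (fun i => (k i : ℤ) - 1)) i = z i - 2 * Real.pi * ((k i : ℤ) - 1 : ℤ) := by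
    have := per3_apply (fun i => (k i : ℤ) - 1) i
    simp only [PiLp.sub_apply, this]
  rw [hw]
  by_cases h1 : z i < 0
  · have hki : k i = 0 := by rw [hk]; simp [h1]
    have hv : ((((k i : ℤ) - 1 : ℤ)) : ℝ) = -1 := by rw [hki]; norm_num
    rw [hv]
    constructor <;> nlinarith [hzi.1, hzi.2]
  · by_cases h2 : z i < 2 * Real.pi
    · have hki : k i = 1 := by rw [hk]; simp [h1, h2]
      have hv : ((((k i : ℤ) - 1 : ℤ)) : ℝ) = 0 := by rw [hki]; norm_num
      rw [hv]
      constructor <;> nlinarith [hzi.1, hzi.2]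
    · have hki : k i = 2 := by rw [hk]; simp [h1, h2]
      have hv : ((((k i : ℤ) - 1 : ℤ)) : ℝ) = 1 := by rw [hki]; norm_num
      rw [hv]
      constructor <;> nlinarith [hzi.1, hzi.2]

lemma lintegral_bigBox_le {h : E3 → ℝ≥0∞}
    (hper : ∀ (x : E3) (m : Fin 3 → ℤ), h (x + per3 m) = h x) :
    ∫⁻ z in BigBox, h z ≤ 27 * ∫⁻ z in FundDom, h z := by
  calc ∫⁻ z in BigBox, h z
      ≤ ∫⁻ z in ⋃ (k : Fin 3 → Fin 3), (fun w => w + per3 (fun i => (k i : ℤ) - 1)) '' FundDom, h z :=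
        lintegral_mono_set bigBox_subset_union
  _ ≤ ∑' (k : Fin 3 → Fin 3), ∫⁻ z in (fun w => w + per3 (fun i => (k i : ℤ) - 1)) '' FundDom, h z :=
        lintegral_iUnion_le _ _
  _ = ∑' (_k : Fin 3 → Fin 3), ∫⁻ z in FundDom, h z := by
        congr 1; funext k
        rw [lintegral_translate]
        congr 1; funext w
        exact hper w _
  _ = 27 * ∫⁻ z in FundDom, h z := by
        rw [tsum_fintype, Finset.sum_const, Finset.card_univ]
        simp only [Fintype.card_fun, Fintype.card_fin]
        norm_num [nsmul_eq_mul]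

lemma main_estimate (p : ℝ) (hp : 1 ≤ p)
    (ϱ : E3 → ℝ) (hϱ : IsMollifier ϱ)
    (v : E3 → E3) (hv : ContDiff ℝ (⊤ : ℕ∞) v) (hvp : IsPeriodic v)
    (B : E3 → E3) (hBm : Measurable B) (hBp : IsPeriodic B)
    (hB : MemLp B (ENNReal.ofReal p) (volume.restrict FundDom))
    {ε : ℝ} (hε0 : 0 < ε) (hε1 : ε < 1) :
    LpNormT p (comm2 ϱ ε v B) ≤ 216 * ε * C2normV v * C0normS ϱ * LpNormT p B := by
  have hp0 : (0:ℝ) < p := by linarith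
  have hppos : p ≠ 0 := hp0.ne'
  set M := C2normV v with hM
  set R := C0normS ϱ with hR
  obtain ⟨hMb, hM0⟩ := C2_facts hv hvp
  obtain ⟨hRb, hR0⟩ := C0_facts hϱ
  set c₁ : ℝ := (ε^3)⁻¹ * R * (M * ε) with hc₁
  have hc₁0 : 0 ≤ c₁ := by positivity
  have hq0 : ENNReal.ofReal p ≠ 0 := (ENNReal.ofReal_pos.2 hp0).ne'
  have hqt : ENNReal.ofReal p ≠ ⊤ := ENNReal.ofReal_ne_top
  have hqtr : (ENNReal.ofReal p).toReal = p := ENNReal.toReal_ofReal hp0.le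
  have hBnn : Measurable fun z => (‖B z‖₊ : ℝ≥0∞) := hBm.nnnorm.coe_nnreal_ennreal
  have hBnp : Measurable fun z => (‖B z‖₊ : ℝ≥0∞) ^ p := hBnn.pow_const p
  have hFDmeas := measurableSet_FundDom
  -- the L^p mass of B
  have hJtop : (∫⁻ z in FundDom, (‖B z‖₊ : ℝ≥0∞) ^ p) ≠ ⊤ := by
    have h1 := hB.2
    rw [eLpNorm_eq_lintegral_rpow_enorm_toReal hq0 hqt, hqtr] at h1
    simp only [enorm_eq_nnnorm] at h1
    intro hJt
    rw [hJt, ENNReal.top_rpow_of_pos (by positivity : (0:ℝ) < 1/p)] at h1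
    exact (lt_irrefl _ h1).elim
  set J : ℝ≥0∞ := ∫⁻ z in FundDom, (‖B z‖₊ : ℝ≥0∞) ^ p with hJdef
  set JB : ℝ≥0∞ := ∫⁻ z in BigBox, (‖B z‖₊ : ℝ≥0∞) ^ p with hJBdef
  have hJB27 : JB ≤ 27 * J := by
    apply lintegral_bigBox_le
    intro x m; simp only [isPeriodic_per3 hBp x m]
  have h27top : (27 : ℝ≥0∞) * J ≠ ⊤ := ENNReal.mul_ne_top (by norm_num) hJtop
  have hJBtop : JB ≠ ⊤ := ne_top_of_le_ne_top h27top hJB27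
  -- 1-mass of B on the big box is finite
  have hAinftop : (∫⁻ z in BigBox, (‖B z‖₊ : ℝ≥0∞)) ≠ ⊤ := by
    have h := eLpNorm_le_eLpNorm_mul_rpow_measure_univ (p := 1) (q := ENNReal.ofReal p)
      (by exact_mod_cast ENNReal.one_le_ofReal.2 hp) (hBm.aestronglyMeasurable (μ := volume.restrict BigBox))
    rw [eLpNorm_one_eq_lintegral_enorm, eLpNorm_eq_lintegral_rpow_enorm_toReal hq0 hqt, hqtr,
      Measure.restrict_apply_univ] at h
    simp only [enorm_eq_nnnorm] at h
    apply ne_top_of_le_ne_top _ h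
    apply ENNReal.mul_ne_top
    · exact (ENNReal.rpow_lt_top_of_nonneg (by positivity) hJBtop).ne
    · exact (ENNReal.rpow_lt_top_of_nonneg
        (by rw [ENNReal.toReal_one]; have : 1/p ≤ 1 := by
              rw [div_le_one hp0]; exact hp
            linarith) volume_BigBox_lt_top.ne).ne
  -- A and S
  set A : E3 → ℝ≥0∞ := fun x => ∫⁻ z in Metric.closedBall x ε, (‖B z‖₊ : ℝ≥0∞) with hAdef
  set S : E3 → ℝ≥0∞ := fun x => ∫⁻ z in Metric.closedBall x ε, (‖B z‖₊ : ℝ≥0∞) ^ p with hSdef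
  have hball_sub : ∀ x ∈ FundDom, Metric.closedBall x ε ⊆ BigBox := by
    intro x hx z hz
    exact mem_BigBox_of_near hx hε0 hε1.le (Metric.mem_closedBall.1 hz)
  have hSle : ∀ x ∈ FundDom, S x ≤ JB := fun x hx => lintegral_mono_set (hball_sub x hx)
  have hAle : ∀ x ∈ FundDom, A x ≤ ∫⁻ z in BigBox, (‖B z‖₊ : ℝ≥0∞) :=
    fun x hx => lintegral_mono_set (hball_sub x hx)
  have hCset : MeasurableSet {q : E3 × E3 | dist q.2 q.1 ≤ ε} :=
    (isClosed_le (continuous_snd.dist continuous_fst) continuous_const).measurableSet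
  have hkmeas : Measurable (Set.indicator {q : E3 × E3 | dist q.2 q.1 ≤ ε}
      (fun q => (‖B q.2‖₊ : ℝ≥0∞) ^ p)) := (hBnp.comp measurable_snd).indicator hCset
  have hSrep : ∀ x, S x = ∫⁻ z, Set.indicator {q : E3 × E3 | dist q.2 q.1 ≤ ε}
      (fun q => (‖B q.2‖₊ : ℝ≥0∞) ^ p) (x, z) := by
    intro x
    show (∫⁻ z in Metric.closedBall x ε, (‖B z‖₊ : ℝ≥0∞) ^ p) = _
    rw [← lintegral_indicator measurableSet_closedBall]
    rfl
  have hSmeas : Measurable S := by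
    have h : Measurable fun x => ∫⁻ z, Set.indicator {q : E3 × E3 | dist q.2 q.1 ≤ ε}
        (fun q => (‖B q.2‖₊ : ℝ≥0∞) ^ p) (x, z) ∂(volume : Measure E3) :=
      Measurable.lintegral_prod_right' hkmeas
    have : S = fun x => ∫⁻ z, Set.indicator {q : E3 × E3 | dist q.2 q.1 ≤ ε}
        (fun q => (‖B q.2‖₊ : ℝ≥0∞) ^ p) (x, z) := funext hSrep
    rw [this]; exact h
  -- Tonelli
  have hTon : ∫⁻ x in FundDom, S x ≤ ENNReal.ofReal (8*ε^3) * JB := by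
    calc ∫⁻ x in FundDom, S x
        = ∫⁻ x in FundDom, ∫⁻ z, Set.indicator {q : E3 × E3 | dist q.2 q.1 ≤ ε}
            (fun q => (‖B q.2‖₊ : ℝ≥0∞) ^ p) (x, z) := lintegral_congr fun x => hSrep x
    _ = ∫⁻ z, ∫⁻ x in FundDom, Set.indicator {q : E3 × E3 | dist q.2 q.1 ≤ ε}
            (fun q => (‖B q.2‖₊ : ℝ≥0∞) ^ p) (x, z) := lintegral_lintegral_swap hkmeas.aemeasurable
    _ ≤ ∫⁻ z, Set.indicator BigBox (fun z => (‖B z‖₊ : ℝ≥0∞) ^ p * ENNReal.ofReal (8*ε^3)) z := by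
        apply lintegral_mono
        intro z
        show (∫⁻ x in FundDom, Set.indicator {q : E3 × E3 | dist q.2 q.1 ≤ ε}
            (fun q => (‖B q.2‖₊ : ℝ≥0∞) ^ p) (x, z)) ≤ _
        have hrw : (fun x => Set.indicator {q : E3 × E3 | dist q.2 q.1 ≤ ε}
            (fun q => (‖B q.2‖₊ : ℝ≥0∞) ^ p) (x, z))
            = Set.indicator (Metric.closedBall z ε) (fun _ => (‖B z‖₊ : ℝ≥0∞) ^ p) := by
          funext x
          by_cases hd : dist z x ≤ ε
          · have hd' : dist x z ≤ ε := by rwa [dist_comm]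
            simp [Set.indicator_apply, Metric.mem_closedBall, hd, hd']
          · have hd' : ¬ dist x z ≤ ε := by rwa [dist_comm]
            simp [Set.indicator_apply, Metric.mem_closedBall, hd, hd']
        rw [hrw, lintegral_indicator_const measurableSet_closedBall,
          Measure.restrict_apply measurableSet_closedBall]
        by_cases hz : z ∈ BigBox
        · rw [Set.indicator_of_mem hz]
          apply mul_le_mul_right
          exact le_trans (measure_mono Set.inter_subset_left) (volume_closedBall_le z hε0.le)
        · rw [Set.indicator_of_notMem hz]
          have he : Metric.closedBall z ε ∩ FundDom = ∅ := by
            ext x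
            simp only [Set.mem_inter_iff, Metric.mem_closedBall, Set.mem_empty_iff_false,
              iff_false, not_and]
            intro hd hxF
            exact hz (mem_BigBox_of_near hxF hε0 hε1.le (by rwa [dist_comm]))
          rw [he]
          simp
    _ = JB * ENNReal.ofReal (8*ε^3) := by
        rw [lintegral_indicator measurableSet_BigBox, lintegral_mul_const _ hBnp]
    _ = ENNReal.ofReal (8*ε^3) * JB := mul_comm _ _
  -- Hölder
  set c₂ : ℝ≥0∞ := ENNReal.ofReal (8*ε^3) ^ (p-1) with hc₂
  have hc₂top : c₂ ≠ ⊤ := ENNReal.rpow_ne_top_of_nonneg (by linarith) ENNReal.ofReal_ne_top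
  have hHolder : ∀ x ∈ FundDom, (A x) ^ p ≤ c₂ * S x := by
    intro x hx
    have h := eLpNorm_le_eLpNorm_mul_rpow_measure_univ (p := 1) (q := ENNReal.ofReal p)
      (ENNReal.one_le_ofReal.2 hp)
      (hBm.aestronglyMeasurable (μ := volume.restrict (Metric.closedBall x ε)))
    rw [eLpNorm_one_eq_lintegral_enorm, eLpNorm_eq_lintegral_rpow_enorm_toReal hq0 hqt, hqtr,
      Measure.restrict_apply_univ] at h
    simp only [enorm_eq_nnnorm] at h
    have hexp : 1 / (1:ℝ≥0∞).toReal - 1/p = 1 - 1/p := by rw [ENNReal.toReal_one]; norm_num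
    rw [hexp] at h
    have h2 : A x ^ p ≤ ((S x ^ (1/p)) * volume (Metric.closedBall x ε) ^ (1 - 1/p)) ^ p :=
      ENNReal.rpow_le_rpow h hp0.le
    rw [ENNReal.mul_rpow_of_nonneg _ _ hp0.le, ← ENNReal.rpow_mul, ← ENNReal.rpow_mul,
      one_div_mul_cancel hppos, ENNReal.rpow_one,
      (by field_simp : (1 - 1/p) * p = p - 1)] at h2
    calc A x ^ p ≤ S x * volume (Metric.closedBall x ε) ^ (p-1) := h2
    _ ≤ S x * c₂ := by
        apply mul_le_mul_right
        exact ENNReal.rpow_le_rpow (volume_closedBall_le x hε0.le) (by linarith)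
    _ = c₂ * S x := mul_comm _ _
  -- pointwise bound on the commutator
  have hpt : ∀ x ∈ FundDom, ‖comm2 ϱ ε v B x‖ ≤ c₁ * (A x).toReal := by
    intro x hx
    have hAx_top : A x ≠ ⊤ := ne_top_of_le_ne_top hAinftop (hAle x hx)
    have hIntB : IntegrableOn (fun z => ‖B z‖) (Metric.closedBall x ε) := by
      refine ⟨hBm.norm.aestronglyMeasurable, ?_⟩
      rw [hasFiniteIntegral_def]
      simp only [enorm_norm', enorm_eq_nnnorm]
      exact lt_of_le_of_ne le_top (by simpa [hAdef] using hAx_top)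
    have hIntc : Integrable (Set.indicator (Metric.closedBall x ε) (fun z => c₁ * ‖B z‖)) volume :=
      (integrable_indicator_iff measurableSet_closedBall).2 (hIntB.const_mul c₁)
    have hgle : ∀ z, ‖mollify ϱ ε (x - z) • (fderiv ℝ v z (B z) - fderiv ℝ v x (B z))‖
        ≤ Set.indicator (Metric.closedBall x ε) (fun z => c₁ * ‖B z‖) z := by
      intro z
      by_cases hz : z ∈ Metric.closedBall x ε
      · rw [Set.indicator_of_mem hz, norm_smul, Real.norm_eq_abs]
        have h1 : |mollify ϱ ε (x - z)| ≤ (ε^3)⁻¹ * R := mollify_abs_le hϱ hε0 _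
        have h2 : ‖fderiv ℝ v z (B z) - fderiv ℝ v x (B z)‖ ≤ M * ε * ‖B z‖ := by
          have he : fderiv ℝ v z (B z) - fderiv ℝ v x (B z)
              = (fderiv ℝ v z - fderiv ℝ v x) (B z) := by
            simp [ContinuousLinearMap.sub_apply]
          rw [he]
          calc ‖(fderiv ℝ v z - fderiv ℝ v x) (B z)‖
              ≤ ‖fderiv ℝ v z - fderiv ℝ v x‖ * ‖B z‖ := ContinuousLinearMap.le_opNorm _ _
          _ ≤ (M * ‖z - x‖) * ‖B z‖ :=
              mul_le_mul_of_nonneg_right (fderiv_lip hv hMb x z) (norm_nonneg _)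
          _ ≤ M * ε * ‖B z‖ := by
              apply mul_le_mul_of_nonneg_right _ (norm_nonneg _)
              apply mul_le_mul_of_nonneg_left _ hM0
              rw [← dist_eq_norm]; exact Metric.mem_closedBall.1 hz
        calc |mollify ϱ ε (x - z)| * ‖fderiv ℝ v z (B z) - fderiv ℝ v x (B z)‖
            ≤ ((ε^3)⁻¹ * R) * (M * ε * ‖B z‖) :=
              mul_le_mul h1 h2 (norm_nonneg _) (by positivity)
        _ = c₁ * ‖B z‖ := by rw [hc₁]; ring
      · rw [Set.indicator_of_notMem hz]
        have hm0 : mollify ϱ ε (x - z) = 0 := by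
          by_contra hne
          have hle := mollify_support hϱ hε0 hne
          rw [Metric.mem_closedBall] at hz
          push_neg at hz
          rw [dist_eq_norm, ← norm_neg, neg_sub] at hz
          linarith
        rw [hm0, zero_smul, norm_zero]
    calc ‖comm2 ϱ ε v B x‖
        ≤ ∫ z, ‖mollify ϱ ε (x - z) • (fderiv ℝ v z (B z) - fderiv ℝ v x (B z))‖ :=
          norm_integral_le_integral_norm _
    _ ≤ ∫ z, Set.indicator (Metric.closedBall x ε) (fun z => c₁ * ‖B z‖) z :=
          integral_mono_of_nonneg (ae_of_all _ fun z => norm_nonneg _) hIntc (ae_of_all _ hgle)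
    _ = ∫ z in Metric.closedBall x ε, c₁ * ‖B z‖ := integral_indicator measurableSet_closedBall
    _ = c₁ * ∫ z in Metric.closedBall x ε, ‖B z‖ := integral_const_mul c₁ _
    _ = c₁ * (A x).toReal := by
        rw [integral_norm_eq_lintegral_enorm
          (hBm.aestronglyMeasurable (μ := volume.restrict (Metric.closedBall x ε)))]
        rfl
  -- integrability of the dominating function
  haveI hfin : IsFiniteMeasure (volume.restrict FundDom) :=
    ⟨by rw [Measure.restrict_apply_univ]; exact volume_FundDom_lt_top⟩
  set Dp : E3 → ℝ := fun x => c₁ ^ p * (c₂ * S x).toReal with hDp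
  have hDpmeas : Measurable Dp := ((hSmeas.const_mul c₂).ennreal_toReal).const_mul _
  have hc₂S_top : ∀ x ∈ FundDom, c₂ * S x ≠ ⊤ := fun x hx =>
    ENNReal.mul_ne_top hc₂top (ne_top_of_le_ne_top hJBtop (hSle x hx))
  have hc₂JBtop : c₂ * JB ≠ ⊤ := ENNReal.mul_ne_top hc₂top hJBtop
  have hDpInt : Integrable Dp (volume.restrict FundDom) := by
    refine Integrable.mono' (integrable_const (c₁^p * (c₂ * JB).toReal))
      hDpmeas.aestronglyMeasurable ?_
    filter_upwards [ae_restrict_mem hFDmeas] with x hx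
    rw [Real.norm_of_nonneg (by positivity)]
    apply mul_le_mul_of_nonneg_left _ (by positivity)
    exact ENNReal.toReal_mono hc₂JBtop (mul_le_mul_right (hSle x hx) c₂)
  -- main chain
  have hstep1 : ∫ x in FundDom, ‖comm2 ϱ ε v B x‖ ^ p ≤ ∫ x in FundDom, Dp x := by
    apply integral_mono_of_nonneg (ae_of_all _ fun x => Real.rpow_nonneg (norm_nonneg _) p) hDpInt
    filter_upwards [ae_restrict_mem hFDmeas] with x hx
    calc ‖comm2 ϱ ε v B x‖ ^ p ≤ (c₁ * (A x).toReal) ^ p :=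
        Real.rpow_le_rpow (norm_nonneg _) (hpt x hx) hp0.le
    _ = c₁ ^ p * ((A x).toReal) ^ p := Real.mul_rpow hc₁0 ENNReal.toReal_nonneg
    _ = c₁ ^ p * ((A x) ^ p).toReal := by rw [ENNReal.toReal_rpow]
    _ ≤ Dp x := by
        apply mul_le_mul_of_nonneg_left _ (Real.rpow_nonneg hc₁0 p)
        exact ENNReal.toReal_mono (hc₂S_top x hx) (hHolder x hx)
  have hstep2 : ∫ x in FundDom, Dp x = c₁ ^ p * (c₂ * ∫⁻ x in FundDom, S x).toReal := by
    rw [hDp, integral_const_mul]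
    congr 1
    rw [← lintegral_const_mul _ hSmeas]
    rw [integral_toReal ((hSmeas.const_mul c₂).aemeasurable)]
    filter_upwards [ae_restrict_mem hFDmeas] with x hx
    exact lt_of_le_of_ne le_top (hc₂S_top x hx)
  have hstep3 : c₂ * ∫⁻ x in FundDom, S x ≤ c₂ * (ENNReal.ofReal (8*ε^3) * (27 * J)) :=
    mul_le_mul_right (hTon.trans (mul_le_mul_right hJB27 _)) c₂
  have hfin3 : c₂ * (ENNReal.ofReal (8*ε^3) * (27 * J)) ≠ ⊤ :=
    ENNReal.mul_ne_top hc₂top (ENNReal.mul_ne_top ENNReal.ofReal_ne_top h27top)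
  have hcomp : (c₂ * (ENNReal.ofReal (8*ε^3) * (27 * J))).toReal
      = (8*ε^3) ^ (p-1) * ((8*ε^3) * (27 * J.toReal)) := by
    rw [ENNReal.toReal_mul, ENNReal.toReal_mul, ENNReal.toReal_mul, hc₂, ← ENNReal.toReal_rpow,
      ENNReal.toReal_ofReal (by positivity)]
    simp
  have ha : (8*ε^3:ℝ)^(p-1) * (8*ε^3) = (8*ε^3)^p := by
    have h := Real.rpow_add (show (0:ℝ) < 8*ε^3 by positivity) (p-1) 1
    rw [Real.rpow_one, (show p - 1 + 1 = p by ring)] at h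
    exact h.symm
  have hc₁a : c₁ * (8*ε^3) = 8*M*R*ε := by
    rw [hc₁]; field_simp
  have hT : ∫ x in FundDom, ‖comm2 ϱ ε v B x‖ ^ p ≤ (8*M*R*ε)^p * (27 * J.toReal) := by
    calc ∫ x in FundDom, ‖comm2 ϱ ε v B x‖ ^ p ≤ ∫ x in FundDom, Dp x := hstep1
    _ = c₁ ^ p * (c₂ * ∫⁻ x in FundDom, S x).toReal := hstep2
    _ ≤ c₁ ^ p * (c₂ * (ENNReal.ofReal (8*ε^3) * (27 * J))).toReal := by
        apply mul_le_mul_of_nonneg_left _ (Real.rpow_nonneg hc₁0 p)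
        exact ENNReal.toReal_mono hfin3 hstep3
    _ = c₁ ^ p * ((8*ε^3) ^ (p-1) * ((8*ε^3) * (27 * J.toReal))) := by rw [hcomp]
    _ = (c₁ ^ p * (8*ε^3) ^ p) * (27 * J.toReal) := by
        rw [← ha]; ring
    _ = ((c₁ * (8*ε^3)) ^ p) * (27 * J.toReal) := by
        rw [Real.mul_rpow hc₁0 (by positivity)]
    _ = (8*M*R*ε)^p * (27 * J.toReal) := by rw [hc₁a]
  have hLB : ∫ x in FundDom, ‖B x‖ ^ p = J.toReal := by
    rw [integral_eq_lintegral_of_nonneg_ae (ae_of_all _ fun x => Real.rpow_nonneg (norm_nonneg _) p)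
      ((hBm.norm.pow_const p).aestronglyMeasurable)]
    congr 1
    apply lintegral_congr; intro z
    rw [← enorm_eq_nnnorm, ← ofReal_norm_eq_enorm, ENNReal.ofReal_rpow_of_nonneg (norm_nonneg _) hp0.le]
  have hTnn : 0 ≤ ∫ x in FundDom, ‖comm2 ϱ ε v B x‖ ^ p :=
    integral_nonneg fun x => Real.rpow_nonneg (norm_nonneg _) p
  rw [LpNormT, LpNormT, hLB]
  calc (∫ x in FundDom, ‖comm2 ϱ ε v B x‖ ^ p) ^ (1/p)
      ≤ ((8*M*R*ε)^p * (27 * J.toReal)) ^ (1/p) := Real.rpow_le_rpow hTnn hT (by positivity)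
  _ = (8*M*R*ε) * (27 ^ (1/p) * J.toReal ^ (1/p)) := by
      rw [Real.mul_rpow (by positivity) (by positivity),
        Real.mul_rpow (by norm_num) ENNReal.toReal_nonneg,
        ← Real.rpow_mul (by positivity), mul_one_div_cancel hppos, Real.rpow_one]
  _ ≤ (8*M*R*ε) * (27 * J.toReal ^ (1/p)) := by
      apply mul_le_mul_of_nonneg_left _ (by positivity)
      apply mul_le_mul_of_nonneg_right _ (Real.rpow_nonneg ENNReal.toReal_nonneg _)
      calc (27:ℝ) ^ (1/p) ≤ 27 ^ (1:ℝ) :=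
        Real.rpow_le_rpow_of_exponent_le (by norm_num) (by rw [div_le_one hp0]; exact hp)
      _ = 27 := Real.rpow_one 27
  _ = 216 * ε * M * R * J.toReal ^ (1/p) := by ring

end AuxLemmas

/-- For `p ∈ [1,∞)`, smooth divergence-free periodic `v`, and
divergence-free `B ∈ L^p(𝕋³;ℝ³)`, there is a constant `C` independent of `ε`, `v`, `B` with
`‖[·∇v,ϱ_ε]B‖_{L^p} ≤ C ε ‖v‖_{C²} ‖ϱ‖_{C⁰} ‖B‖_{L^p}` for `ε ∈ (0,1)`; in particular
`‖[·∇v,ϱ_ε]B‖_{L^p} → 0` as `ε → 0⁺`. -/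
theorem comm2_estimate_and_convergence (p : ℝ) (hp : 1 ≤ p)
    (ϱ : E3 → ℝ) (hϱ : IsMollifier ϱ) :
    (∃ C : ℝ, 0 < C ∧
      ∀ (v : E3 → E3), ContDiff ℝ (⊤ : ℕ∞) v → IsPeriodic v → DivFree v →
      ∀ (B : E3 → E3), Measurable B → IsPeriodic B →
        MemLp B (ENNReal.ofReal p) (volume.restrict FundDom) → DistDivFree B →
      ∀ ε ∈ Set.Ioo (0 : ℝ) 1,
        LpNormT p (comm2 ϱ ε v B) ≤ C * ε * C2normV v * C0normS ϱ * LpNormT p B) ∧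
    (∀ (v : E3 → E3), ContDiff ℝ (⊤ : ℕ∞) v → IsPeriodic v → DivFree v →
     ∀ (B : E3 → E3), Measurable B → IsPeriodic B →
        MemLp B (ENNReal.ofReal p) (volume.restrict FundDom) → DistDivFree B →
      Filter.Tendsto (fun ε => LpNormT p (comm2 ϱ ε v B))
        (nhdsWithin 0 (Set.Ioi 0)) (nhds 0)) := by
  constructor
  · refine ⟨216, by norm_num, ?_⟩
    intro v hv hvp _ B hBm hBp hB _ ε hε
    have h := main_estimate p hp ϱ hϱ v hv hvp B hBm hBp hB hε.1 hε.2
    calc LpNormT p (comm2 ϱ ε v B) ≤ 216 * ε * C2normV v * C0normS ϱ * LpNormT p B := h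
    _ = 216 * ε * C2normV v * C0normS ϱ * LpNormT p B := by ring
  · intro v hv hvp _ B hBm hBp hB _
    have hM0 := (C2_facts hv hvp).2
    have hR0 := (C0_facts hϱ).2
    have hB0 : 0 ≤ LpNormT p B :=
      Real.rpow_nonneg (integral_nonneg fun x => Real.rpow_nonneg (norm_nonneg _) p) _
    set K : ℝ := 216 * C2normV v * C0normS ϱ * LpNormT p B with hK
    have hK0 : 0 ≤ K := by positivity
    apply squeeze_zero'
    · exact Filter.Eventually.of_forall fun ε =>
        Real.rpow_nonneg (integral_nonneg fun x => Real.rpow_nonneg (norm_nonneg _) p) _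
    · filter_upwards [Ioo_mem_nhdsGT_of_mem (Set.mem_Ico.2 ⟨le_refl (0:ℝ), zero_lt_one⟩)] with ε hε
      calc LpNormT p (comm2 ϱ ε v B)
          ≤ 216 * ε * C2normV v * C0normS ϱ * LpNormT p B :=
            main_estimate p hp ϱ hϱ v hv hvp B hBm hBp hB hε.1 hε.2
      _ = K * ε := by rw [hK]; ring
    · have : Filter.Tendsto (fun ε : ℝ => K * ε) (nhdsWithin 0 (Set.Ioi 0)) (nhds (K * 0)) :=
        Filter.Tendsto.mono_left ((continuous_const.mul continuous_id).tendsto 0) nhdsWithin_le_nhds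
      simpa using this
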